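/- Let X be a Bousfield-Segal space and let μ₂ be a section of the acyclic Kan fibration β₂ = c₂\X, with fraction operation defined on vertices by f/g := d₀(μ₂(f,g)). Then for all vertices x, y, z of X₀ the fraction operation restricts to a map X₁(x,y) × X₁(x,z) → X₁(z,y) on hom-spaces, and, writing v ∼ w for equality of classes in π₀: (1) f/f ∼ 1_y for every vertex f of X₁(x,y); (2) f/1_x ∼ f for every vertex f of X₁(x,y); (3) f/g ∼ (f/h)/(g/h) for every triple (f,g,h) of vertices of X₁ with d₁f = d₁g = d₁h. -/

import Mathlib

open CategoryTheory CategoryTheory.GrothendieckTopology CategoryTheory.Limits Simplicial SSet Opposite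

noncomputable section

namespace BousfieldPaper

/-! ## Basic lifting-property classes of simplicial sets -/

/-- A Kan fibration: a map with the right lifting property against all horn inclusions. -/
def KanFibration {S T : SSet.{0}} (p : S ⟶ T) : Prop :=
  ∀ (n : ℕ) (i : Fin (n + 2)), HasLiftingProperty (Λ[n + 1, i].ι) p

/-- An acyclic (trivial) Kan fibration: a map with the right lifting property against
all boundary inclusions. -/
def TrivialKanFibration {S T : SSet.{0}} (p : S ⟶ T) : Prop :=
  ∀ n : ℕ, HasLiftingProperty (∂Δ[n].ι) p

/-- The class of maps with the right lifting property against every map in `T`. -/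
def rlpOf {C : Type*} [Category C] (T : MorphismProperty C) : MorphismProperty C :=
  fun _ _ p => ∀ ⦃A B : C⦄ (i : A ⟶ B), T i → HasLiftingProperty i p

/-- The class of maps with the left lifting property against every map in `T`. -/
def llpOf {C : Type*} [Category C] (T : MorphismProperty C) : MorphismProperty C :=
  fun _ _ i => ∀ ⦃S T' : C⦄ (p : S ⟶ T'), T p → HasLiftingProperty i p

/-- The saturation `llp(rlp(S))` of a class of maps. -/
def saturationOf {C : Type*} [Category C] (S : MorphismProperty C) : MorphismProperty C :=
  llpOf (rlpOf S)

/-- The class of all horn inclusions (up to isomorphism of arrows). -/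
def HornClass : MorphismProperty SSet.{0} := fun _ _ f =>
  ∃ (n : ℕ) (i : Fin (n + 2)), Nonempty (Arrow.mk f ≅ Arrow.mk (Λ[n + 1, i].ι))

/-- The class of left horn inclusions `Λ[n,0] → Δ[n]`, `n ≥ 2` (up to isomorphism of arrows). -/
def LeftHornClass : MorphismProperty SSet.{0} := fun _ _ f =>
  ∃ n : ℕ, 2 ≤ n ∧ Nonempty (Arrow.mk f ≅ Arrow.mk (Λ[n, 0].ι))

/-- Anodyne maps: the saturation of the class of horn inclusions. -/
def Anodyne : MorphismProperty SSet.{0} := saturationOf HornClass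

/-- A weak homotopy equivalence of simplicial sets (in the Kan--Quillen sense):
a map admitting a factorization as an anodyne map followed by an acyclic Kan fibration. -/
def WeakHomotopyEquivalence {S T : SSet.{0}} (f : S ⟶ T) : Prop :=
  ∃ (Z : SSet.{0}) (i : S ⟶ Z) (p : Z ⟶ T),
    Anodyne i ∧ TrivialKanFibration p ∧ i ≫ p = f

/-! ## Saturated classes -/

/-- `f` is a retract of `g` in the arrow category. -/
def IsRetractOf {C : Type*} [Category C] {X Y X' Y' : C} (f : X ⟶ Y) (g : X' ⟶ Y') : Prop :=
  ∃ (i : Arrow.mk f ⟶ Arrow.mk g) (r : Arrow.mk g ⟶ Arrow.mk f), i ≫ r = 𝟙 _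

/-- The inclusion functor of the subposet `{x | x < j}` of `J`. -/
def iioFunctor {J : Type} [Preorder J] (j : J) : Set.Iio j ⥤ J :=
  Monotone.functor (f := fun x => (x : J)) (fun _ _ h => h)

/-- The cocone on the restriction of `F : J ⥤ C` to `{x | x < j}` with apex `F.obj j`. -/
def coconeBelow {J : Type} [Preorder J] {C : Type*} [Category C]
    (F : J ⥤ C) (j : J) : Cocone (iioFunctor j ⋙ F) where
  pt := F.obj j
  ι :=
    { app := fun x => F.map (homOfLE (le_of_lt x.2))
      naturality := fun x y g => by
        dsimp [iioFunctor, Monotone.functor]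
        rw [← F.map_comp, Category.comp_id]
        congr 1 }

/-- A class of morphisms of simplicial sets is *saturated* (weakly saturated) if it is closed
under pushouts (cobase change), retracts and transfinite compositions. -/
structure IsSaturated (A : MorphismProperty SSet.{0}) : Prop where
  pushout : ∀ ⦃X Y X' Y' : SSet.{0}⦄ (f : X ⟶ Y) (u : X ⟶ X') (v : Y ⟶ Y') (f' : X' ⟶ Y'),
    IsPushout f u v f' → A f → A f'
  retract : ∀ ⦃X Y X' Y' : SSet.{0}⦄ (f : X ⟶ Y) (g : X' ⟶ Y'),
    IsRetractOf f g → A g → A f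
  transfinite : ∀ (J : Type) (_ : LinearOrder J) (_ : SuccOrder J) (_ : OrderBot J)
    (_ : WellFoundedLT J) (F : J ⥤ SSet.{0}) (c : Cocone F) (_ : IsColimit c),
    (∀ j : J, ¬IsMax j → A (F.map (homOfLE (Order.le_succ j)))) →
    (∀ j : J, Order.IsSuccLimit j → Nonempty (IsColimit (coconeBelow F j))) →
    A (c.ι.app ⊥)

/-- Right cancellation property for monomorphisms. -/
def RightCancel (A : MorphismProperty SSet.{0}) : Prop :=
  ∀ ⦃X Y Z : SSet.{0}⦄ (u : X ⟶ Y) (v : Y ⟶ Z),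
    Mono u → Mono v → A (u ≫ v) → A u → A v

/-- Left cancellation property for monomorphisms. -/
def LeftCancel (A : MorphismProperty SSet.{0}) : Prop :=
  ∀ ⦃X Y Z : SSet.{0}⦄ (u : X ⟶ Y) (v : Y ⟶ Z),
    Mono u → Mono v → A (u ≫ v) → A v → A u

/-- 3-for-2 for monomorphisms: both left and right cancellation. -/
def ThreeForTwo (A : MorphismProperty SSet.{0}) : Prop :=
  RightCancel A ∧ LeftCancel A

/-! ## The left cone, the spine, and related subcomplexes of the standard simplex -/

/-- The left cone `C n ⊆ Δ[n]`: the union of the images of the initial edges `0 → i`. -/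
def coneSub (n : ℕ) : Subfunctor Δ[n] where
  obj m := {α | ∃ i : ℕ, 1 ≤ i ∧ i ≤ n ∧
    ∀ j, (stdSimplex.asOrderHom α j : ℕ) = 0 ∨ (stdSimplex.asOrderHom α j : ℕ) = i}
  map := by
    rintro m m' g α ⟨i, hi1, hin, h⟩
    exact ⟨i, hi1, hin, fun j => h _⟩

/-- The spine `Sp n ⊆ Δ[n]`: the union of the images of the edges `i → i+1`. -/
def spineSub (n : ℕ) : Subfunctor Δ[n] where
  obj m := {α | ∃ i : ℕ, i + 1 ≤ n ∧
    ∀ j, (stdSimplex.asOrderHom α j : ℕ) = i ∨ (stdSimplex.asOrderHom α j : ℕ) = i + 1}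
  map := by
    rintro m m' g α ⟨i, hi, h⟩
    exact ⟨i, hi, fun j => h _⟩

/-- The union `(SpC) n ⊆ Δ[n]` of the images of the `2`-simplices `{0, i, i+1}`, `0 < i < n`. -/
def spcSub (n : ℕ) : Subfunctor Δ[n] where
  obj m := {α | ∃ i : ℕ, 0 < i ∧ i + 1 ≤ n ∧
    ∀ j, (stdSimplex.asOrderHom α j : ℕ) = 0 ∨ (stdSimplex.asOrderHom α j : ℕ) = i ∨ (stdSimplex.asOrderHom α j : ℕ) = i + 1}
  map := by
    rintro m m' g α ⟨i, h₀, h₁, h⟩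
    exact ⟨i, h₀, h₁, fun j => h _⟩

/-- The canonical inclusion `k n : C n → Λ[n, 0]` of the left cone into the left horn. -/
def coneToHorn (n : ℕ) (hn : 2 ≤ n) : ((coneSub n).toFunctor : SSet.{0}) ⟶ Λ[n, 0] where
  app m := ↾fun α => by
    refine ⟨α.1, ?_⟩
    obtain ⟨i, hi1, hin, h⟩ := α.2
    intro hu
    rw [Set.eq_univ_iff_forall] at hu
    obtain ⟨kv, hkv0, hkvi, hkvlt⟩ : ∃ kv : ℕ, kv ≠ 0 ∧ kv ≠ i ∧ kv < n + 1 := by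
      rcases eq_or_ne i 1 with hc | hc
      · exact ⟨2, by omega, by omega, by omega⟩
      · exact ⟨1, by omega, by omega, by omega⟩
    rcases hu ⟨kv, hkvlt⟩ with hr | h0
    · obtain ⟨j, hj⟩ := hr
      have hval := congrArg Fin.val hj
      rcases h j with h' | h' <;> simp_all
    · have := congrArg Fin.val (Set.mem_singleton_iff.1 h0)
      simp_all

/-- The nerve `IΔ^n` of the free groupoid (codiscrete groupoid) on `{0, …, n}`:
its `m`-simplices are all (not necessarily monotone) functions `Fin (m+1) → Fin (n+1)`. -/
def IDelta (n : ℕ) : SSet.{0} where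
  obj m := Fin (m.unop.len + 1) → Fin (n + 1)
  map f := ↾fun α => α ∘ f.unop.toOrderHom

/-- The canonical inclusion `Δ[n] → IΔ^n`. -/
def iDeltaIncl (n : ℕ) : (Δ[n] : SSet.{0}) ⟶ IDelta n where
  app m := ↾fun α => ⇑(stdSimplex.asOrderHom α)

/-- The vertex `k : Δ[0] → IΔ^n`. -/
def iDeltaVertex (n : ℕ) (k : Fin (n + 1)) : (Δ[0] : SSet.{0}) ⟶ IDelta n where
  app m := ↾fun _ => fun _ => k


/-! ## Bisimplicial sets, the box product and the slash construction -/

/-- Bisimplicial sets: presheaves of sets on `Δ × Δ`. -/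
abbrev BSSet : Type 1 := (SimplexCategory × SimplexCategory)ᵒᵖ ⥤ Type

/-- The box product `A □ B` of two simplicial sets: `(A □ B)_{n,m} = A_n × B_m`. -/
def box (A B : SSet.{0}) : BSSet where
  obj nm := A.obj (op nm.unop.1) × B.obj (op nm.unop.2)
  map f := ↾fun p => ⟨A.map f.unop.1.op p.1, B.map f.unop.2.op p.2⟩

/-- The box product, functorially in its second variable. -/
def boxFunctor (A : SSet.{0}) : SSet.{0} ⥤ BSSet where
  obj B := box A B
  map g :=
    { app := fun nm => ↾fun p => ⟨p.1, g.app _ p.2⟩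
      naturality := fun nm nm' f => by
        ext p
        exact Prod.ext rfl (NatTrans.naturality_apply g f.unop.2.op p.2 :) }

/-- The box product is natural in its first variable. -/
def boxHomLeft {A A' : SSet.{0}} (f : A ⟶ A') (B : SSet.{0}) :
    (boxFunctor A).obj B ⟶ (boxFunctor A').obj B where
  app nm := ↾fun p => ⟨f.app _ p.1, p.2⟩
  naturality nm nm' g := by
    ext p
    exact Prod.ext (NatTrans.naturality_apply f g.unop.1.op p.1 :) rfl

lemma boxHomLeft_natural {A A' : SSet.{0}} (f : A ⟶ A') {B B' : SSet.{0}} (g : B ⟶ B') :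
    (boxFunctor A).map g ≫ boxHomLeft f B' = boxHomLeft f B ≫ (boxFunctor A').map g := rfl

/-- The simplicial set `A \ X` with `m`-simplices the bisimplicial maps `A □ Δ[m] → X`. -/
def slash (A : SSet.{0}) (X : BSSet) : SSet.{0} :=
  SSet.stdSimplex.op ⋙ ((boxFunctor A).op ⋙ yoneda.obj X)

/-- Functoriality (contravariance) of `A \ X` in `A`. -/
def slashMap {A A' : SSet.{0}} (f : A ⟶ A') (X : BSSet) : slash A' X ⟶ slash A X :=
  Functor.whiskerLeft SSet.stdSimplex.op
    (Functor.whiskerRight (NatTrans.op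
      { app := fun B => boxHomLeft f B
        naturality := fun _ _ g => (boxHomLeft_natural f g).symm }) (yoneda.obj X))

lemma slashMap_id (A : SSet.{0}) (X : BSSet) : slashMap (𝟙 A) X = 𝟙 (slash A X) := rfl

lemma slashMap_comp {A A' A'' : SSet.{0}} (f : A ⟶ A') (g : A' ⟶ A'') (X : BSSet) :
    slashMap (f ≫ g) X = slashMap g X ≫ slashMap f X := rfl


/-! ## Columns, Reedy fibrancy, Segal and Bousfield maps -/

/-- The `n`-th column `X_n := Δ[n] \ X` of a bisimplicial set. -/
def col (n : ℕ) (X : BSSet) : SSet.{0} := slash Δ[n] X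

/-- The face map `d_i : X_{n+1} → X_n` between columns. -/
def colδ {n : ℕ} (i : Fin (n + 2)) (X : BSSet) : col (n + 1) X ⟶ col n X :=
  slashMap (SSet.stdSimplex.map (SimplexCategory.δ i)) X

/-- The degeneracy map `s_i : X_n → X_{n+1}` between columns. -/
def colσ {n : ℕ} (i : Fin (n + 1)) (X : BSSet) : col n X ⟶ col (n + 1) X :=
  slashMap (SSet.stdSimplex.map (SimplexCategory.σ i)) X

/-- A bisimplicial set is `v`-fibrant (Reedy fibrant) if `f \ X` is a Kan fibration for
every monomorphism `f` of simplicial sets. -/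
def VFibrant (X : BSSet) : Prop :=
  ∀ ⦃A B : SSet.{0}⦄ (f : A ⟶ B), Mono f → KanFibration (slashMap f X)

/-- The `n`-th Bousfield map `β_n = c_n \ X : X_n → C_n \ X`. -/
def bousfieldMap (n : ℕ) (X : BSSet) : col n X ⟶ slash (coneSub n).toFunctor X :=
  slashMap (coneSub n).ι X

/-- The `n`-th Segal map `ξ_n = sp_n \ X : X_n → Sp_n \ X`. -/
def segalMap (n : ℕ) (X : BSSet) : col n X ⟶ slash (spineSub n).toFunctor X :=
  slashMap (spineSub n).ι X

/-- A Bousfield-Segal space: a `v`-fibrant bisimplicial set whose Bousfield maps `β_n`,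
`n ≥ 2`, are weak homotopy equivalences. -/
def IsBSegal (X : BSSet) : Prop :=
  VFibrant X ∧ ∀ n : ℕ, 2 ≤ n → WeakHomotopyEquivalence (bousfieldMap n X)

/-- A Segal space: a `v`-fibrant bisimplicial set whose Segal maps `ξ_n`,
`n ≥ 2`, are weak homotopy equivalences. -/
def IsSegal (X : BSSet) : Prop :=
  VFibrant X ∧ ∀ n : ℕ, 2 ≤ n → WeakHomotopyEquivalence (segalMap n X)

/-- The map `IΔ^1 \ X → X_0` induced by the vertex `{0} : Δ[0] → IΔ^1`. -/
def completenessMap (X : BSSet) : slash (IDelta 1) X ⟶ col 0 X :=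
  slashMap (iDeltaVertex 1 0) X

/-- A complete Bousfield-Segal space. -/
def IsCompleteBSegal (X : BSSet) : Prop :=
  IsBSegal X ∧ WeakHomotopyEquivalence (completenessMap X)

/-- A bisimplicial set is homotopically constant if every map of the simplex category
induces a weak homotopy equivalence between the corresponding columns. -/
def HomotopicallyConstant (X : BSSet) : Prop :=
  ∀ ⦃a b : SimplexCategory⦄ (f : a ⟶ b),
    WeakHomotopyEquivalence (slashMap (SSet.stdSimplex.map f) X)

/-! ## Vertices, edges and the fraction operation -/

/-- The vertices of a simplicial set. -/
def vert (S : SSet.{0}) : Type := S.obj (op (SimplexCategory.mk 0))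

/-- Two vertices of a simplicial set lie in the same connected component, i.e. they have
equal classes in `π₀`. -/
def hSim (S : SSet.{0}) (a b : vert S) : Prop :=
  Relation.EqvGen (fun v w : vert S => ∃ e : S.obj (op (SimplexCategory.mk 1)),
    SimplicialObject.δ S 1 e = v ∧ SimplicialObject.δ S 0 e = w) a b

/-- The edge `0 → i` of the left cone `C n`. -/
def coneEdge (n : ℕ) (i : Fin (n + 1)) (hi : i ≠ 0) :
    (Δ[1] : SSet.{0}) ⟶ (coneSub n).toFunctor where
  app m := ↾fun β => by
    refine ⟨(SSet.stdSimplex.map (SimplexCategory.mkOfLe 0 i (Fin.zero_le i))).app m β, ?_⟩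
    have hne : (i : ℕ) ≠ 0 := fun h => hi (by apply Fin.ext; simpa using h)
    refine ⟨(i : ℕ), by omega, i.is_le, fun j => ?_⟩
    have key : ∀ k : Fin 2,
        (((SimplexCategory.mkOfLe (0 : Fin (n + 1)) i (Fin.zero_le i)).toOrderHom k : Fin (n+1)) : ℕ) = 0 ∨
        (((SimplexCategory.mkOfLe (0 : Fin (n + 1)) i (Fin.zero_le i)).toOrderHom k : Fin (n+1)) : ℕ) = i := by
      intro k
      match k with
      | 0 => left; rfl
      | 1 => right; rfl
    exact key _
  naturality m m' g := by
    ext β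
    apply Subtype.ext
    exact NatTrans.naturality_apply (SSet.stdSimplex.map
      (SimplexCategory.mkOfLe 0 i (Fin.zero_le i))) g β

variable (X : BSSet)

/-- Vertex component of the restriction along the edge `0 → 2` of `C₂` (the "numerator"). -/
def eF (w : vert (slash (coneSub 2).toFunctor X)) : vert (col 1 X) :=
  (slashMap (coneEdge 2 2 (by decide)) X).app _ w

/-- Vertex component of the restriction along the edge `0 → 1` of `C₂` (the "denominator"). -/
def eG (w : vert (slash (coneSub 2).toFunctor X)) : vert (col 1 X) :=
  (slashMap (coneEdge 2 1 (by decide)) X).app _ w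

/-- Vertex component of the face map `d_i : X_1 → X_0`. -/
def dV (i : Fin 2) (f : vert (col 1 X)) : vert (col 0 X) := (colδ i X).app _ f

/-- Vertex component of the degeneracy `s_0 : X_0 → X_1`; `oneV X x` is `1_x`. -/
def oneV (x : vert (col 0 X)) : vert (col 1 X) := (colσ 0 X).app _ x

/-- The fraction operation determined by a section `μ₂` of the Bousfield map `β₂`:
`f/g := d₀ (μ₂ (f, g))`. -/
def fracV (μ₂ : slash (coneSub 2).toFunctor X ⟶ col 2 X)
    (w : vert (slash (coneSub 2).toFunctor X)) : vert (col 1 X) :=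
  (colδ 0 X).app _ (μ₂.app _ w)

lemma dV_oneV (x : vert (col 0 X)) (i : Fin 2) : dV X i (oneV X x) = x := by
  have h : colσ (0 : Fin 1) X ≫ colδ i X = 𝟙 (col 0 X) := by
    erw [colδ, colσ, ← slashMap_comp, ← Functor.map_comp]
    have : SimplexCategory.δ i ≫ SimplexCategory.σ (0 : Fin 1) = 𝟙 (SimplexCategory.mk 0) := by
      fin_cases i
      · exact SimplexCategory.δ_comp_σ_self
      · exact SimplexCategory.δ_comp_σ_succ
    erw [this, CategoryTheory.Functor.map_id, slashMap_id]; rfl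
  exact ConcreteCategory.congr_hom (congrArg (fun (t : col 0 X ⟶ col 0 X) => t.app (op (SimplexCategory.mk 0)))
    h) x

/-- The identity morphism `1_x` as an element of the hom-space `X₁(x,x)`. -/
def idHom (x : vert (col 0 X)) :
    {f : vert (col 1 X) // dV X 1 f = x ∧ dV X 0 f = x} :=
  ⟨oneV X x, dV_oneV X x 1, dV_oneV X x 0⟩


/-! ## Cellularity, pushouts of coproducts, finite compositions of pushouts -/

/-- `f` is a pushout (cobase change) of `g`. -/
def IsPushoutOf {C : Type*} [Category C] {A B X Y : C} (g : A ⟶ B) (f : X ⟶ Y) : Prop :=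
  ∃ (u : A ⟶ X) (v : B ⟶ Y), IsPushout g u v f

/-- `f` is a pushout of a coproduct of maps belonging to the class `S`. -/
def IsPushoutOfCoproductOf (S : MorphismProperty SSet.{0}) {P Q : SSet.{0}} (f : P ⟶ Q) : Prop :=
  ∃ (ι : Type) (A B : ι → SSet.{0}) (g : ∀ i, A i ⟶ B i),
    (∀ i, S (g i)) ∧
      IsPushoutOf (Limits.Sigma.desc (fun i => g i ≫ Limits.Sigma.ι B i) : (∐ A) ⟶ (∐ B)) f

/-- `f` is cellular with respect to the class `S`: it is a (transfinite, here `ℕ`-indexed)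
composition of pushouts of coproducts of maps of `S`. -/
def IsCellularIn (S : MorphismProperty SSet.{0}) {X Y : SSet.{0}} (f : X ⟶ Y) : Prop :=
  ∃ (F : ℕ ⥤ SSet.{0}) (c : Cocone F) (_ : IsColimit c) (e₀ : F.obj 0 ≅ X) (e : c.pt ≅ Y),
    (∀ m : ℕ, IsPushoutOfCoproductOf S (F.map (homOfLE (Nat.le_succ m)))) ∧
      f = e₀.inv ≫ c.ι.app 0 ≫ e.hom

/-- `f` is a finite composition of pushouts of `g`. -/
inductive FinCompPushoutsOf {A B : SSet.{0}} (g : A ⟶ B) : ∀ {X Y : SSet.{0}}, (X ⟶ Y) → Prop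
| of {X Y : SSet.{0}} (f : X ⟶ Y) : IsPushoutOf g f → FinCompPushoutsOf g f
| comp {X Y Z : SSet.{0}} (f₁ : X ⟶ Y) (f₂ : Y ⟶ Z) :
      IsPushoutOf g f₁ → FinCompPushoutsOf g f₂ → FinCompPushoutsOf g (f₁ ≫ f₂)

/-! ## Lattice operations on subpresheaves -/

variable {C : Type*} [Category C]

/-- Intersection of two subpresheaves. -/
def subInf {F : Cᵒᵖ ⥤ Type} (G G' : Subfunctor F) : Subfunctor F where
  obj U := G.obj U ∩ G'.obj U
  map i := fun _ hx => ⟨G.map i hx.1, G'.map i hx.2⟩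

/-- Union of two subpresheaves. -/
def subSup {F : Cᵒᵖ ⥤ Type} (G G' : Subfunctor F) : Subfunctor F where
  obj U := G.obj U ∪ G'.obj U
  map i := by
    rintro x (hx | hx)
    · exact Or.inl (G.map i hx)
    · exact Or.inr (G'.map i hx)

lemma subInf_le_left {F : Cᵒᵖ ⥤ Type} (G G' : Subfunctor F) : subInf G G' ≤ G :=
  fun _ => Set.inter_subset_left

lemma le_subSup_left {F : Cᵒᵖ ⥤ Type} (G G' : Subfunctor F) : G ≤ subSup G G' :=
  fun _ => Set.subset_union_left

/-! ## The coface `d¹` and the left cone -/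

/-- The coface map `d¹ : Δ[n] → Δ[n+1]`. -/
def d1Map (n : ℕ) : (Δ[n] : SSet.{0}) ⟶ Δ[n + 1] :=
  SSet.stdSimplex.map (SimplexCategory.δ 1)

/-- The restriction of `d¹` to a map `C n → C (n+1) ∩ d¹[Δ[n]]`. -/
def coneToInter (n : ℕ) : ((coneSub n).toFunctor : SSet.{0}) ⟶
    (subInf (coneSub (n + 1)) (Subfunctor.range (d1Map n))).toFunctor where
  app m := ↾fun α => by
    refine ⟨(d1Map n).app m α.1, ?_, ⟨α.1, rfl⟩⟩
    obtain ⟨i, hi1, hin, h⟩ := α.2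
    refine ⟨i + 1, by omega, by omega, fun j => ?_⟩
    have key : stdSimplex.asOrderHom ((d1Map n).app m α.1) j
        = (1 : Fin (n + 2)).succAbove (stdSimplex.asOrderHom α.1 j) := rfl
    rcases h j with h' | h'
    · left
      have h0 : stdSimplex.asOrderHom α.1 j = 0 := by
        apply Fin.ext; exact h'
      rw [key, h0, Fin.succAbove_of_castSucc_lt]
      · simp
      · simp
    · right
      rw [key, Fin.succAbove_of_le_castSucc]
      · simp [Fin.val_succ, h']
      · rw [Fin.le_def]
        simpa using by omega
  naturality m m' g := by
    ext α
    apply Subtype.ext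
    exact NatTrans.naturality_apply (d1Map n) g α.1

/-! ## Horizontally constant bisimplicial sets and closure properties -/

/-- `p₁* A`: the horizontally constant bisimplicial set with `(p₁* A)_{n,m} = A_n`. -/
def pHorizontal (A : SSet.{0}) : BSSet where
  obj nm := A.obj (op nm.unop.1)
  map f := A.map f.unop.1.op

/-- A class of maps of bisimplicial sets is stable under pullbacks. -/
def StableUnderPullbacksB (F : MorphismProperty BSSet) : Prop :=
  ∀ ⦃W X Y Z : BSSet⦄ (p' : W ⟶ X) (f' : W ⟶ Z) (f : X ⟶ Y) (p : Z ⟶ Y),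
    IsPullback p' f' f p → F f → F f'

/-- A class of maps of bisimplicial sets is stable under retracts. -/
def StableUnderRetractsB (F : MorphismProperty BSSet) : Prop :=
  ∀ ⦃X Y X' Y' : BSSet⦄ (f : X ⟶ Y) (g : X' ⟶ Y'), IsRetractOf f g → F g → F f

/-- A class of maps of bisimplicial sets is closed under sequential (inverse) limits:
limits of towers of arrows belonging to the class again belong to the class. -/
def ClosedUnderSequentialLimitsB (F : MorphismProperty BSSet) : Prop :=
  ∀ (G : ℕᵒᵖ ⥤ Arrow BSSet), (∀ n : ℕᵒᵖ, F (G.obj n).hom) →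
    ∀ (c : Cone G), IsLimit c → F c.pt.hom

/-! The fraction `f/g` is `d₀` of a lift of `(f, g)` along the acyclic fibration `β₂`. Two
`2`-simplices over the same vertex of `C₂\X` lie in a fibre of `β₂`, hence are joined by an edge
lying over a degenerate one; so up to `π₀` the fraction can be computed from any `2`-simplex
over `(f, g)`. The degeneracies `s₁ f` and `s₀ f` lie over `(f, f)` and `(f, 1_x)`, which gives
(1) and (2). For (3), lift the cone `(h, g, f)` along `β₃` to a `3`-simplex `τ`: its faces
`d₁τ, d₂τ, d₃τ` lie over `(f, g), (f, h), (g, h)`, and `d₀τ` lies over `(d₀d₂τ, d₀d₃τ)`.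
Applying `d₀` to the fibre edges from `μ₂(f, h)` to `d₂τ` and from `μ₂(g, h)` to `d₃τ` gives two
edges of `X₁` with a common (degenerate) source face, i.e. an edge of `C₂\X ≅ X₁ ×_{X₀} X₁`
from `(f/h, g/h)` to `β₂(d₀τ)`. Hence `(f/h)/(g/h) ∼ d₀d₀τ = d₀d₁τ ∼ f/g`. -/

open SimplexCategory

lemma hSim_iff_π₀_mk_eq {S : SSet.{0}} {a b : vert S} :
    hSim S a b ↔ π₀.mk (X := S) a = π₀.mk b := by
  refine Iff.trans ?_ (π₀.mk_eq_mk_iff _ _).symm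
  constructor <;> refine Relation.EqvGen.mono (fun v w h => ?_) _ _
  · obtain ⟨e, he₁, he₀⟩ := h
    exact ⟨Edge.mk e he₁ he₀⟩
  · obtain ⟨e⟩ := h
    exact ⟨e.edge, e.src_eq, e.tgt_eq⟩

lemma stdSimplex_ext {n : ℕ} {m : SimplexCategoryᵒᵖ} {x y : Δ[n].obj m}
    (h : ∀ j, stdSimplex.asOrderHom x j = stdSimplex.asOrderHom y j) : x = y :=
  stdSimplex.objEquiv.injective (Hom.ext _ _ (OrderHom.ext _ _ (funext h)))

def boundaryZeroDesc (S : SSet.{0}) : (∂Δ[0] : SSet.{0}) ⟶ S where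
  app _ := ↾fun x => absurd x.2 (by simp)
  naturality _ _ _ := by ext x; exact absurd x.2 (by simp)

lemma boundary_one_apply_eq_apply_zero {m : SimplexCategoryᵒᵖ} (x : (∂Δ[1] : SSet.{0}).obj m)
    (j : Fin (m.unop.len + 1)) : stdSimplex.asOrderHom x.1 j = stdSimplex.asOrderHom x.1 0 := by
  obtain ⟨d⟩ := m
  induction d using SimplexCategory.rec with | _ d => ?_
  obtain ⟨k, hk⟩ := (mem_boundary_iff_notMem_range x.1).1 x.2
  have h₁ : stdSimplex.asOrderHom x.1 j ≠ k := fun h => hk ⟨j, h⟩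
  have h₂ : stdSimplex.asOrderHom x.1 0 ≠ k := fun h => hk ⟨0, h⟩
  omega

def boundaryOneDesc {S : SSet.{0}} (v : Fin 2 → S _⦋0⦌) : (∂Δ[1] : SSet.{0}) ⟶ S where
  app m := ↾fun x => S.map (m.unop.const ⦋0⦌ 0).op (v (stdSimplex.asOrderHom x.1 0))
  naturality m m' g := by
    ext x
    change S.map _ (v (stdSimplex.asOrderHom x.1 (g.unop.toOrderHom 0))) =
      S.map g (S.map _ (v (stdSimplex.asOrderHom x.1 0)))
    rw [boundary_one_apply_eq_apply_zero x, ← Functor.map_comp_apply]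
    rfl

lemma boundaryOneDesc_ι {S : SSet.{0}} (v : Fin 2 → S _⦋0⦌) (i : Fin 2) :
    yonedaEquiv (boundary.ι i ≫ boundaryOneDesc v) = v (1 - i) := by
  change S.map (SimplexCategory.const ⦋0⦌ ⦋0⦌ 0).op _ = _
  rw [show SimplexCategory.const ⦋0⦌ ⦋0⦌ 0 = 𝟙 _ by decide, op_id, S.map_id_apply]
  fin_cases i <;> rfl

section TrivialKanFibration

variable {S T : SSet.{0}} {p : S ⟶ T}

lemma TrivialKanFibration.of_kanFibration (hp : KanFibration p)
    (hw : WeakHomotopyEquivalence p) : TrivialKanFibration p := by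
  obtain ⟨Z, i, q, hi, hq, hiq⟩ := hw
  have : HasLiftingProperty i p := hi p fun _ _ j ⟨k, l, ⟨e⟩⟩ =>
    have := hp k l
    .of_arrow_iso_left e.symm p
  intro n
  have := hq n
  exact (RetractArrow.ofRightLiftingProperty hiq).rightLiftingProperty _

lemma IsBSegal.trivialKanFibration_bousfieldMap {X : BSSet} (hX : IsBSegal X) {n : ℕ}
    (hn : 2 ≤ n) : TrivialKanFibration (bousfieldMap n X) :=
  .of_kanFibration (hX.1 _ (NatTrans.mono_of_mono_app _)) (hX.2 n hn)

lemma TrivialKanFibration.surjective (hp : TrivialKanFibration p) :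
    Function.Surjective (p.app (op ⦋0⦌)) := by
  intro t
  have := hp 0
  have sq : CommSq (boundaryZeroDesc S) ∂Δ[0].ι p (yonedaEquiv.symm t) := ⟨boundary.hom_ext₀⟩
  refine ⟨yonedaEquiv sq.lift, ?_⟩
  rw [← SSet.yonedaEquiv_comp, sq.fac_right, Equiv.apply_symm_apply]

lemma TrivialKanFibration.exists_edge (hp : TrivialKanFibration p) {v₀ v₁ : S _⦋0⦌}
    (h : p.app _ v₀ = p.app _ v₁) :
    ∃ e : S.Edge v₀ v₁, p.app _ e.edge = T.σ 0 (p.app _ v₀) := by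
  have := hp 1
  have hv : ∀ c, p.app _ (![v₀, v₁] c) = p.app _ v₀ := by
    intro c
    fin_cases c
    exacts [rfl, h.symm]
  have sq : CommSq (boundaryOneDesc ![v₀, v₁]) ∂Δ[1].ι p (SSet.const (p.app _ v₀)) := ⟨by
    ext m x
    change p.app m (S.map _ _) = T.map _ _
    rw [NatTrans.naturality_apply, hv]⟩
  have src : S.δ 1 (yonedaEquiv sq.lift) = v₀ := by
    rw [← stdSimplex.yonedaEquiv_δ_comp, ← boundary.ι_ι_assoc, sq.fac_left, boundaryOneDesc_ι]
    rfl
  have tgt : S.δ 0 (yonedaEquiv sq.lift) = v₁ := by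
    rw [← stdSimplex.yonedaEquiv_δ_comp, ← boundary.ι_ι_assoc, sq.fac_left, boundaryOneDesc_ι]
    rfl
  refine ⟨Edge.mk _ src tgt, ?_⟩
  change p.app _ (yonedaEquiv sq.lift) = _
  rw [← SSet.yonedaEquiv_comp, sq.fac_right]
  change T.map (SimplexCategory.const ⦋1⦌ ⦋0⦌ 0).op _ = T.map (SimplexCategory.σ 0).op _
  rw [show SimplexCategory.const ⦋1⦌ ⦋0⦌ 0 = σ 0 by decide]

end TrivialKanFibration

def coneCollapse (n : ℕ) : ⦋n⦌ ⟶ ⦋1⦌ :=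
  mkHom ⟨fun j => if j = 0 then 0 else 1, fun j k hjk => by
    dsimp only
    split_ifs <;> simp_all⟩

section Cone

variable {n : ℕ} {m : SimplexCategoryᵒᵖ}

/-- The index `i` of the cone edge `0 → i + 1` containing a simplex of `C (n + 1)`, read off from
its last vertex (`0` for the degenerate simplices at the vertex `0`). -/
def coneIndex (α : Δ[n + 1].obj m) : Fin (n + 1) :=
  (0 : Fin (n + 1)).predAbove (stdSimplex.asOrderHom α (Fin.last _))

lemma exists_of_mem_coneSub {α : Δ[n + 1].obj m} (hα : α ∈ (coneSub (n + 1)).obj m) :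
    ∃ i : Fin (n + 2), i ≠ 0 ∧
      ∀ j, stdSimplex.asOrderHom α j = 0 ∨ stdSimplex.asOrderHom α j = i := by
  obtain ⟨i, hi₁, hi₂, h⟩ := hα
  refine ⟨⟨i, by omega⟩, fun h' => by simp [Fin.ext_iff] at h'; omega, fun j => ?_⟩
  simp only [Fin.ext_iff]
  exact h j

lemma last_eq_zero_or_coneIndex_succ {α : Δ[n + 1].obj m} {i : Fin (n + 2)} (hi : i ≠ 0)
    (hα : ∀ j, stdSimplex.asOrderHom α j = 0 ∨ stdSimplex.asOrderHom α j = i) :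
    stdSimplex.asOrderHom α (Fin.last _) = 0 ∨ (coneIndex α).succ = i := by
  rcases hα (Fin.last _) with h | h
  · exact .inl h
  · exact .inr (by rw [coneIndex, h, Fin.succ_predAbove_zero hi])

lemma coneCollapse_coneEdge (i : Fin (n + 2)) (hi : i ≠ 0) (β : Δ[1].obj m) :
    (SSet.stdSimplex.map (coneCollapse (n + 1))).app m ((coneEdge (n + 1) i hi).app m β).1 = β :=
  stdSimplex_ext fun j => by
    change (if (mkOfLe 0 i (Fin.zero_le i)).toOrderHom (stdSimplex.asOrderHom β j) = 0
      then 0 else 1) = stdSimplex.asOrderHom β j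
    generalize stdSimplex.asOrderHom β j = a
    fin_cases a
    exacts [if_pos rfl, if_neg hi]

lemma coneEdge_apply_eq_zero_or (i : Fin (n + 2)) (hi : i ≠ 0) (β : Δ[1].obj m) (j) :
    stdSimplex.asOrderHom ((coneEdge (n + 1) i hi).app m β).1 j = 0 ∨
      stdSimplex.asOrderHom ((coneEdge (n + 1) i hi).app m β).1 j = i := by
  change (mkOfLe 0 i (Fin.zero_le i)).toOrderHom (stdSimplex.asOrderHom β j) = 0 ∨
    (mkOfLe 0 i (Fin.zero_le i)).toOrderHom (stdSimplex.asOrderHom β j) = i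
  generalize stdSimplex.asOrderHom β j = a
  fin_cases a
  exacts [.inl rfl, .inr rfl]

lemma coneEdge_coneIndex_app {α : Δ[n + 1].obj m} (hα : α ∈ (coneSub (n + 1)).obj m) :
    (coneEdge (n + 1) (coneIndex α).succ (Fin.succ_ne_zero _)).app m
      ((SSet.stdSimplex.map (coneCollapse (n + 1))).app m α) = ⟨α, hα⟩ := by
  obtain ⟨i, hi, hαi⟩ := exists_of_mem_coneSub hα
  refine Subtype.ext (stdSimplex_ext fun j => ?_)
  change (mkOfLe 0 _ (Fin.zero_le _)).toOrderHom
    (if stdSimplex.asOrderHom α j = 0 then 0 else 1) = stdSimplex.asOrderHom α j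
  rcases hαi j with h | h
  · rw [if_pos h, h]
    rfl
  · have hj : stdSimplex.asOrderHom α j ≠ 0 := h ▸ hi
    rw [if_neg hj, h]
    refine ((last_eq_zero_or_coneIndex_succ hi hαi).resolve_left fun h₀ => hj ?_)
    exact le_antisymm (h₀ ▸ (stdSimplex.asOrderHom α).monotone (Fin.le_last _)) (Fin.zero_le _)

variable {X : BSSet} {B : SSet.{0}}

lemma app_eq_app_of_last_eq_zero {F G : box Δ[1] B ⟶ X}
    (h : boxHomLeft (stdSimplex.δ 1) B ≫ F = boxHomLeft (stdSimplex.δ 1) B ≫ G)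
    {k : (SimplexCategory × SimplexCategory)ᵒᵖ} {β : Δ[1].obj (op k.unop.1)}
    (hβ : stdSimplex.asOrderHom β (Fin.last _) = 0) (b : B.obj (op k.unop.2)) :
    F.app k (β, b) = G.app k (β, b) := by
  have hz : ∀ j, stdSimplex.asOrderHom β j = 0 := fun j =>
    le_antisymm (hβ ▸ (stdSimplex.asOrderHom β).monotone (Fin.le_last j)) (Fin.zero_le _)
  obtain rfl : β = (stdSimplex.δ 1).app _ (stdSimplex.const 0 0 _) :=
    stdSimplex_ext fun j => (hz j).trans rfl
  exact ConcreteCategory.congr_hom (NatTrans.congr_app h k)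
    ((stdSimplex.const 0 0 _, b) : (box Δ[0] B).obj k)

/-- `C (n + 1)` is the union of the cone edges `0 → i + 1`, glued along the vertex `0`, so a map
out of `C (n + 1) □ B` is a family of maps out of `Δ[1] □ B` agreeing on `{0} □ B`. -/
def coneDesc (F : Fin (n + 1) → (box Δ[1] B ⟶ X))
    (hF : ∀ i, boxHomLeft (stdSimplex.δ 1) B ≫ F i = boxHomLeft (stdSimplex.δ 1) B ≫ F 0) :
    box (coneSub (n + 1)).toFunctor B ⟶ X where
  app k := ↾fun q => (F (coneIndex q.1.1)).app k
    ((SSet.stdSimplex.map (coneCollapse (n + 1))).app _ q.1.1, q.2)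
  naturality k k' g := by
    ext ⟨⟨α, hα⟩, b⟩
    obtain ⟨i, hi, hαi⟩ := exists_of_mem_coneSub hα
    set θ := g.unop.1
    set c := SSet.stdSimplex.map (coneCollapse (n + 1))
    change (F (coneIndex (Δ[n + 1].map θ.op α))).app k' (c.app _ (Δ[n + 1].map θ.op α),
        B.map g.unop.2.op b) = X.map g ((F (coneIndex α)).app k (c.app _ α, b))
    refine Eq.trans ?_ (NatTrans.naturality_apply (F (coneIndex α)) g
      ((c.app _ α, b) : (box Δ[1] B).obj k))
    change _ = (F (coneIndex α)).app k' (c.app _ (Δ[n + 1].map θ.op α), B.map g.unop.2.op b)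
    rcases hαi (θ.toOrderHom (Fin.last _)) with h₀ | h₁
    · refine app_eq_app_of_last_eq_zero ((hF _).trans (hF _).symm) ?_ _
      exact if_pos h₀
    · have hlast : stdSimplex.asOrderHom α (Fin.last _) = i :=
        (hαi _).resolve_left fun h₀ => hi (h₁.symm.trans (le_antisymm
          (h₀ ▸ (stdSimplex.asOrderHom α).monotone (Fin.le_last _)) (Fin.zero_le _)))
      have hidx : coneIndex (Δ[n + 1].map θ.op α) = coneIndex α := by
        change Fin.predAbove 0 (stdSimplex.asOrderHom α (θ.toOrderHom (Fin.last _))) =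
          Fin.predAbove 0 (stdSimplex.asOrderHom α (Fin.last _))
        rw [h₁, hlast]
      rw [hidx]

lemma coneEdge_comp_coneDesc (F : Fin (n + 1) → (box Δ[1] B ⟶ X))
    (hF : ∀ i, boxHomLeft (stdSimplex.δ 1) B ≫ F i = boxHomLeft (stdSimplex.δ 1) B ≫ F 0)
    (i : Fin (n + 1)) :
    boxHomLeft (coneEdge (n + 1) i.succ i.succ_ne_zero) B ≫ coneDesc F hF = F i := by
  ext k ⟨β, b⟩
  set α := ((coneEdge (n + 1) i.succ i.succ_ne_zero).app _ β).1
  have hc : (SSet.stdSimplex.map (coneCollapse (n + 1))).app _ α = β :=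
    coneCollapse_coneEdge i.succ i.succ_ne_zero β
  change (F (coneIndex α)).app k (((SSet.stdSimplex.map (coneCollapse (n + 1))).app _ α, b) :
    (box Δ[1] B).obj k) = (F i).app k (β, b)
  rw [hc]
  rcases last_eq_zero_or_coneIndex_succ i.succ_ne_zero (coneEdge_apply_eq_zero_or i.succ _ β)
    with h | h
  · exact app_eq_app_of_last_eq_zero ((hF _).trans (hF _).symm) (hc ▸ if_pos h) b
  · rw [Fin.succ_inj.1 h]

lemma box_coneSub_hom_ext {W W' : box (coneSub (n + 1)).toFunctor B ⟶ X}
    (h : ∀ i : Fin (n + 1), boxHomLeft (coneEdge (n + 1) i.succ i.succ_ne_zero) B ≫ W =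
      boxHomLeft (coneEdge (n + 1) i.succ i.succ_ne_zero) B ≫ W') : W = W' := by
  ext k ⟨⟨α, hα⟩, b⟩
  rw [← coneEdge_coneIndex_app hα]
  exact ConcreteCategory.congr_hom (NatTrans.congr_app (h _) k)
    (((SSet.stdSimplex.map (coneCollapse (n + 1))).app _ α, b) : (box Δ[1] B).obj k)

lemma δ_one_comp_coneEdge (i j : Fin (n + 1)) (hi : i ≠ 0) (hj : j ≠ 0) :
    stdSimplex.δ 1 ≫ coneEdge n i hi = stdSimplex.δ 1 ≫ coneEdge n j hj := by
  ext k x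
  refine Subtype.ext (stdSimplex_ext fun l => ?_)
  change (mkOfLe 0 i (Fin.zero_le i)).toOrderHom ((δ 1).toOrderHom (stdSimplex.asOrderHom x l)) =
    (mkOfLe 0 j (Fin.zero_le j)).toOrderHom ((δ 1).toOrderHom (stdSimplex.asOrderHom x l))
  rw [Fin.fin_one_eq_zero (stdSimplex.asOrderHom x l)]
  rfl

end Cone

abbrev colMap {a b : ℕ} (u : ⦋a⦌ ⟶ ⦋b⦌) (X : BSSet) : col b X ⟶ col a X :=
  slashMap (SSet.stdSimplex.map u) X

section Columns

variable {X : BSSet} {m : SimplexCategoryᵒᵖ}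

lemma colMap_app_colMap_app {a b c : ℕ} (u : ⦋a⦌ ⟶ ⦋b⦌) (v : ⦋b⦌ ⟶ ⦋c⦌) (σ : (col c X).obj m) :
    (colMap u X).app m ((colMap v X).app m σ) = (colMap (u ≫ v) X).app m σ :=
  rfl

lemma colMap_app_colMap_app_eq {a b b' c : ℕ} {u : ⦋a⦌ ⟶ ⦋b⦌} {v : ⦋b⦌ ⟶ ⦋c⦌}
    {u' : ⦋a⦌ ⟶ ⦋b'⦌} {v' : ⦋b'⦌ ⟶ ⦋c⦌} (h : u ≫ v = u' ≫ v') (σ : (col c X).obj m) :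
    (colMap u X).app m ((colMap v X).app m σ) = (colMap u' X).app m ((colMap v' X).app m σ) := by
  rw [colMap_app_colMap_app, colMap_app_colMap_app, h]

lemma colMap_id_app {a : ℕ} (σ : (col a X).obj m) : (colMap (𝟙 ⦋a⦌) X).app m σ = σ :=
  congrArg (fun f : Δ[a] ⟶ Δ[a] => (slashMap f X).app m σ)
    (CategoryTheory.Functor.map_id SSet.stdSimplex ⦋a⦌)

lemma colMap_app_colMap_app_of_comp_eq {a b c : ℕ} {u : ⦋a⦌ ⟶ ⦋b⦌} {v : ⦋b⦌ ⟶ ⦋c⦌}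
    {w : ⦋a⦌ ⟶ ⦋c⦌} (h : u ≫ v = w) (σ : (col c X).obj m) :
    (colMap u X).app m ((colMap v X).app m σ) = (colMap w X).app m σ := by
  rw [colMap_app_colMap_app, h]

lemma slashMap_coneEdge_bousfieldMap {n : ℕ} (i : Fin (n + 1)) (hi : i ≠ 0)
    (σ : (col n X).obj m) :
    (slashMap (coneEdge n i hi) X).app m ((bousfieldMap n X).app m σ) =
      (colMap (mkOfLe 0 i (Fin.zero_le i)) X).app m σ :=
  rfl

def coneLift {n : ℕ} (F : Fin (n + 1) → (col 1 X).obj m)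
    (hF : ∀ i, (colδ 1 X).app m (F i) = (colδ 1 X).app m (F 0)) :
    (slash (coneSub (n + 1)).toFunctor X).obj m :=
  coneDesc (B := SSet.stdSimplex.obj m.unop) F hF

lemma slashMap_coneEdge_coneLift {n : ℕ} (F : Fin (n + 1) → (col 1 X).obj m)
    (hF : ∀ i, (colδ 1 X).app m (F i) = (colδ 1 X).app m (F 0)) (i : Fin (n + 1)) :
    (slashMap (coneEdge (n + 1) i.succ i.succ_ne_zero) X).app m (coneLift F hF) = F i :=
  coneEdge_comp_coneDesc F hF i

lemma slash_coneSub_ext {n : ℕ} {w w' : (slash (coneSub (n + 1)).toFunctor X).obj m}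
    (h : ∀ i : Fin (n + 1), (slashMap (coneEdge (n + 1) i.succ i.succ_ne_zero) X).app m w =
      (slashMap (coneEdge (n + 1) i.succ i.succ_ne_zero) X).app m w') : w = w' :=
  box_coneSub_hom_ext h

end Columns

section ConeTwo

variable {X : BSSet} {m : SimplexCategoryᵒᵖ}

lemma slash_coneSub_two_ext {w w' : (slash (coneSub 2).toFunctor X).obj m}
    (h₂ : (slashMap (coneEdge 2 2 (by decide)) X).app m w =
      (slashMap (coneEdge 2 2 (by decide)) X).app m w')
    (h₁ : (slashMap (coneEdge 2 1 (by decide)) X).app m w =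
      (slashMap (coneEdge 2 1 (by decide)) X).app m w') : w = w' :=
  slash_coneSub_ext (n := 1) (Fin.forall_fin_two.2 ⟨h₁, h₂⟩)

lemma existsUnique_eF_eG {f g : vert (col 1 X)} (h : dV X 1 f = dV X 1 g) :
    ∃! w : vert (slash (coneSub 2).toFunctor X), eF X w = f ∧ eG X w = g := by
  let F : Fin 2 → vert (col 1 X) := ![g, f]
  have hF : ∀ i, dV X 1 (F i) = dV X 1 (F 0) := Fin.forall_fin_two.2 ⟨rfl, h⟩
  have hw₂ : eF X (coneLift F hF) = f := slashMap_coneEdge_coneLift F hF 1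
  have hw₁ : eG X (coneLift F hF) = g := slashMap_coneEdge_coneLift F hF 0
  exact ⟨coneLift F hF, ⟨hw₂, hw₁⟩, fun w ⟨hf, hg⟩ =>
    slash_coneSub_two_ext (hf.trans hw₂.symm) (hg.trans hw₁.symm)⟩

lemma dV_one_eF (w : vert (slash (coneSub 2).toFunctor X)) :
    dV X 1 (eF X w) = dV X 1 (eG X w) := by
  change (slashMap (stdSimplex.δ 1 ≫ coneEdge 2 2 (by decide)) X).app _ w =
    (slashMap (stdSimplex.δ 1 ≫ coneEdge 2 1 (by decide)) X).app _ w
  rw [δ_one_comp_coneEdge 2 1 (by decide) (by decide)]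

lemma slashMap_coneEdge_two_bousfieldMap (σ : (col 2 X).obj m) :
    (slashMap (coneEdge 2 2 (by decide)) X).app m ((bousfieldMap 2 X).app m σ) =
      (colδ 1 X).app m σ := by
  rw [slashMap_coneEdge_bousfieldMap, show mkOfLe (0 : Fin 3) 2 (Fin.zero_le _) = δ 1 by decide]
  rfl

lemma slashMap_coneEdge_one_bousfieldMap (σ : (col 2 X).obj m) :
    (slashMap (coneEdge 2 1 (by decide)) X).app m ((bousfieldMap 2 X).app m σ) =
      (colδ 2 X).app m σ := by
  rw [slashMap_coneEdge_bousfieldMap, show mkOfLe (0 : Fin 3) 1 (Fin.zero_le _) = δ 2 by decide]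
  rfl

lemma eF_bousfieldMap (σ : vert (col 2 X)) :
    eF X ((bousfieldMap 2 X).app _ σ) = (colδ 1 X).app _ σ :=
  slashMap_coneEdge_two_bousfieldMap σ

lemma eG_bousfieldMap (σ : vert (col 2 X)) :
    eG X ((bousfieldMap 2 X).app _ σ) = (colδ 2 X).app _ σ :=
  slashMap_coneEdge_one_bousfieldMap σ

lemma bousfieldMap_two_eq_iff {σ : vert (col 2 X)} {w : vert (slash (coneSub 2).toFunctor X)} :
    (bousfieldMap 2 X).app _ σ = w ↔
      (colδ 1 X).app _ σ = eF X w ∧ (colδ 2 X).app _ σ = eG X w := by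
  constructor
  · rintro rfl
    exact ⟨(eF_bousfieldMap σ).symm, (eG_bousfieldMap σ).symm⟩
  · rintro ⟨h₂, h₁⟩
    exact slash_coneSub_two_ext ((eF_bousfieldMap σ).trans h₂) ((eG_bousfieldMap σ).trans h₁)

lemma δ_eq_of_slashMap_coneEdge {e : (slash (coneSub 2).toFunctor X) _⦋1⦌}
    {w : vert (slash (coneSub 2).toFunctor X)} (i : Fin 2)
    (h₂ : (col 1 X).δ i ((slashMap (coneEdge 2 2 (by decide)) X).app _ e) = eF X w)
    (h₁ : (col 1 X).δ i ((slashMap (coneEdge 2 1 (by decide)) X).app _ e) = eG X w) :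
    (slash (coneSub 2).toFunctor X).δ i e = w :=
  slash_coneSub_two_ext ((δ_naturality_apply _ _ _).trans h₂) ((δ_naturality_apply _ _ _).trans h₁)

/-- Levelwise `C₂\X` is the pullback `X₁ ×_{X₀} X₁` along `d₁`, so `(d₀E, d₀E')` is an edge
of it. -/
lemma π₀_mk_eq_of_edges {v₁ v₀ v₁' v₀' : vert (col 2 X)} (E : (col 2 X).Edge v₁ v₀)
    (E' : (col 2 X).Edge v₁' v₀') (hE : (colδ 1 X).app _ ((colδ 0 X).app _ E.edge) =
      (colδ 1 X).app _ ((colδ 0 X).app _ E'.edge)) {w w' : vert (slash (coneSub 2).toFunctor X)}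
    (hwF : eF X w = (colδ 0 X).app _ v₁) (hwG : eG X w = (colδ 0 X).app _ v₁')
    (hw'F : eF X w' = (colδ 0 X).app _ v₀) (hw'G : eG X w' = (colδ 0 X).app _ v₀') :
    π₀.mk (X := slash (coneSub 2).toFunctor X) w = π₀.mk w' := by
  let e := coneLift ![(colδ 0 X).app _ E'.edge, (colδ 0 X).app _ E.edge]
    (Fin.forall_fin_two.2 ⟨rfl, hE⟩)
  have hF : (slashMap (coneEdge 2 2 (by decide)) X).app _ e = (colδ 0 X).app _ E.edge :=
    slashMap_coneEdge_coneLift _ _ 1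
  have hG : (slashMap (coneEdge 2 1 (by decide)) X).app _ e = (colδ 0 X).app _ E'.edge :=
    slashMap_coneEdge_coneLift _ _ 0
  have hd₀ : ∀ (i : Fin 2) (E : (col 2 X) _⦋1⦌),
      (col 1 X).δ i ((colδ 0 X).app _ E) = (colδ 0 X).app _ ((col 2 X).δ i E) :=
    fun i E => (δ_naturality_apply _ _ _).symm
  have h₁ : (slash (coneSub 2).toFunctor X).δ 1 e = w := by
    refine δ_eq_of_slashMap_coneEdge 1 ?_ ?_
    · rw [hF, hd₀, E.src_eq, hwF]
    · rw [hG, hd₀, E'.src_eq, hwG]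
  have h₀ : (slash (coneSub 2).toFunctor X).δ 0 e = w' := by
    refine δ_eq_of_slashMap_coneEdge 0 ?_ ?_
    · rw [hF, hd₀, E.tgt_eq, hw'F]
    · rw [hG, hd₀, E'.tgt_eq, hw'G]
  exact π₀.sound (Edge.mk e h₁ h₀)

end ConeTwo

section Fraction

variable {X : BSSet} {m : SimplexCategoryᵒᵖ} {μ₂ : slash (coneSub 2).toFunctor X ⟶ col 2 X}

lemma bousfieldMap_app_app_of_section (hμ₂ : μ₂ ≫ bousfieldMap 2 X = 𝟙 _)
    (w : (slash (coneSub 2).toFunctor X).obj m) : (bousfieldMap 2 X).app m (μ₂.app m w) = w :=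
  ConcreteCategory.congr_hom (NatTrans.congr_app hμ₂ m) w

lemma dV_one_fracV (hμ₂ : μ₂ ≫ bousfieldMap 2 X = 𝟙 _) (w : vert (slash (coneSub 2).toFunctor X)) :
    dV X 1 (fracV X μ₂ w) = dV X 0 (eG X w) := by
  rw [← (bousfieldMap_two_eq_iff.1 (bousfieldMap_app_app_of_section hμ₂ w)).2]
  exact colMap_app_colMap_app_eq (by decide) _

lemma dV_zero_fracV (hμ₂ : μ₂ ≫ bousfieldMap 2 X = 𝟙 _)
    (w : vert (slash (coneSub 2).toFunctor X)) :
    dV X 0 (fracV X μ₂ w) = dV X 0 (eF X w) := by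
  rw [← (bousfieldMap_two_eq_iff.1 (bousfieldMap_app_app_of_section hμ₂ w)).1]
  exact colMap_app_colMap_app_eq (by decide) _

lemma π₀_mk_fracV_bousfieldMap (hβ : TrivialKanFibration (bousfieldMap 2 X))
    (hμ₂ : μ₂ ≫ bousfieldMap 2 X = 𝟙 _) (σ : vert (col 2 X)) :
    π₀.mk (X := col 1 X) (fracV X μ₂ ((bousfieldMap 2 X).app _ σ)) =
      π₀.mk ((colδ 0 X).app _ σ) := by
  obtain ⟨e, -⟩ := hβ.exists_edge (bousfieldMap_app_app_of_section hμ₂ _)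
  exact π₀.sound (e.map (colδ 0 X))


lemma π₀_mk_fracV_of_eF_eq_eG (hβ : TrivialKanFibration (bousfieldMap 2 X))
    (hμ₂ : μ₂ ≫ bousfieldMap 2 X = 𝟙 _) {w : vert (slash (coneSub 2).toFunctor X)}
    (hw : eF X w = eG X w) :
    π₀.mk (X := col 1 X) (fracV X μ₂ w) = π₀.mk (oneV X (dV X 0 (eF X w))) := by
  set f := eF X w
  have hσ : (bousfieldMap 2 X).app _ ((colσ 1 X).app _ f) = w := by
    refine bousfieldMap_two_eq_iff.2 ⟨?_, ?_⟩
    · exact (colMap_app_colMap_app_of_comp_eq (by decide) f).trans (colMap_id_app f)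
    · exact (colMap_app_colMap_app_of_comp_eq (by decide) f).trans ((colMap_id_app f).trans hw)
  rw [← hσ]
  exact (π₀_mk_fracV_bousfieldMap hβ hμ₂ _).trans
    (congrArg _ (colMap_app_colMap_app_eq (by decide) f))

lemma π₀_mk_fracV_of_eG_eq_oneV (hβ : TrivialKanFibration (bousfieldMap 2 X))
    (hμ₂ : μ₂ ≫ bousfieldMap 2 X = 𝟙 _) {w : vert (slash (coneSub 2).toFunctor X)}
    (hw : eG X w = oneV X (dV X 1 (eF X w))) :
    π₀.mk (X := col 1 X) (fracV X μ₂ w) = π₀.mk (eF X w) := by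
  set f := eF X w
  have hσ : (bousfieldMap 2 X).app _ ((colσ 0 X).app _ f) = w := by
    refine bousfieldMap_two_eq_iff.2 ⟨?_, ?_⟩
    · exact (colMap_app_colMap_app_of_comp_eq (by decide) f).trans (colMap_id_app f)
    · exact (colMap_app_colMap_app_eq (by decide) f).trans hw.symm
  rw [← hσ]
  exact (π₀_mk_fracV_bousfieldMap hβ hμ₂ _).trans
    (congrArg _ ((colMap_app_colMap_app_of_comp_eq (by decide) f).trans (colMap_id_app f)))

lemma colδ_one_colδ_zero_of_bousfieldMap_eq_σ {E : (col 2 X) _⦋1⦌}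
    {w : vert (slash (coneSub 2).toFunctor X)}
    (hE : (bousfieldMap 2 X).app _ E = (slash (coneSub 2).toFunctor X).σ 0 w) :
    (colδ 1 X).app _ ((colδ 0 X).app _ E) = (col 0 X).σ 0 ((colδ 0 X).app _ (eG X w)) := by
  calc (colδ 1 X).app _ ((colδ 0 X).app _ E) = (colδ 0 X).app _ ((colδ 2 X).app _ E) :=
        colMap_app_colMap_app_eq (by decide) E
    _ = (colδ 0 X).app _ ((slashMap (coneEdge 2 1 (by decide)) X).app _
          ((bousfieldMap 2 X).app _ E)) := by rw [slashMap_coneEdge_one_bousfieldMap]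
    _ = (colδ 0 X).app _ ((col 1 X).σ 0 (eG X w)) := by
      rw [hE]
      exact congrArg _ (σ_naturality_apply _ _ _)
    _ = _ := σ_naturality_apply _ _ _

lemma π₀_mk_eq_of_eF_eG_fracV (hβ : TrivialKanFibration (bousfieldMap 2 X))
    (hμ₂ : μ₂ ≫ bousfieldMap 2 X = 𝟙 _) {σ σ' : vert (col 2 X)}
    (hσ : (colδ 2 X).app _ σ = (colδ 2 X).app _ σ') {w w' : vert (slash (coneSub 2).toFunctor X)}
    (hwF : eF X w = fracV X μ₂ ((bousfieldMap 2 X).app _ σ))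
    (hwG : eG X w = fracV X μ₂ ((bousfieldMap 2 X).app _ σ'))
    (hw'F : eF X w' = (colδ 0 X).app _ σ) (hw'G : eG X w' = (colδ 0 X).app _ σ') :
    π₀.mk (X := slash (coneSub 2).toFunctor X) w = π₀.mk w' := by
  obtain ⟨E, hE⟩ :=
    hβ.exists_edge (bousfieldMap_app_app_of_section hμ₂ ((bousfieldMap 2 X).app _ σ))
  obtain ⟨E', hE'⟩ :=
    hβ.exists_edge (bousfieldMap_app_app_of_section hμ₂ ((bousfieldMap 2 X).app _ σ'))
  refine π₀_mk_eq_of_edges E E' ?_ hwF hwG hw'F hw'G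
  rw [colδ_one_colδ_zero_of_bousfieldMap_eq_σ hE, colδ_one_colδ_zero_of_bousfieldMap_eq_σ hE',
    bousfieldMap_app_app_of_section hμ₂, bousfieldMap_app_app_of_section hμ₂, eG_bousfieldMap,
    eG_bousfieldMap, hσ]

lemma π₀_mk_fracV_colδ_one (hβ : TrivialKanFibration (bousfieldMap 2 X))
    (hμ₂ : μ₂ ≫ bousfieldMap 2 X = 𝟙 _) (τ : vert (col 3 X))
    {w : vert (slash (coneSub 2).toFunctor X)}
    (hwF : eF X w = fracV X μ₂ ((bousfieldMap 2 X).app _ ((colδ 2 X).app _ τ)))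
    (hwG : eG X w = fracV X μ₂ ((bousfieldMap 2 X).app _ ((colδ 3 X).app _ τ))) :
    π₀.mk (X := col 1 X) (fracV X μ₂ ((bousfieldMap 2 X).app _ ((colδ 1 X).app _ τ))) =
      π₀.mk (fracV X μ₂ w) := by
  have hw : π₀.mk (X := slash (coneSub 2).toFunctor X) w =
      π₀.mk ((bousfieldMap 2 X).app _ ((colδ 0 X).app _ τ)) :=
    π₀_mk_eq_of_eF_eG_fracV hβ hμ₂ (colMap_app_colMap_app_eq (by decide) τ) hwF hwG
      ((eF_bousfieldMap _).trans (colMap_app_colMap_app_eq (by decide) τ))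
      ((eG_bousfieldMap _).trans (colMap_app_colMap_app_eq (by decide) τ))
  calc π₀.mk (fracV X μ₂ ((bousfieldMap 2 X).app _ ((colδ 1 X).app _ τ)))
      = π₀.mk ((colδ 0 X).app _ ((colδ 1 X).app _ τ)) := π₀_mk_fracV_bousfieldMap hβ hμ₂ _
    _ = π₀.mk ((colδ 0 X).app _ ((colδ 0 X).app _ τ)) :=
        congrArg _ (colMap_app_colMap_app_eq (by decide) τ)
    _ = π₀.mk (fracV X μ₂ ((bousfieldMap 2 X).app _ ((colδ 0 X).app _ τ))) :=
        (π₀_mk_fracV_bousfieldMap hβ hμ₂ _).symm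
    _ = π₀.mk (fracV X μ₂ w) := congrArg (mapπ₀ (μ₂ ≫ colδ 0 X)) hw.symm

lemma exists_bousfieldMap_colδ (hβ₃ : TrivialKanFibration (bousfieldMap 3 X))
    {w₁ w₂ w₃ : vert (slash (coneSub 2).toFunctor X)} (h₂₁ : eF X w₂ = eF X w₁)
    (h₃₁ : eF X w₃ = eG X w₁) (h₂₃ : eG X w₂ = eG X w₃) :
    ∃ τ : vert (col 3 X), (bousfieldMap 2 X).app _ ((colδ 1 X).app _ τ) = w₁ ∧
      (bousfieldMap 2 X).app _ ((colδ 2 X).app _ τ) = w₂ ∧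
      (bousfieldMap 2 X).app _ ((colδ 3 X).app _ τ) = w₃ := by
  have hF : ∀ i, dV X 1 (![eG X w₂, eG X w₁, eF X w₁] i) = dV X 1 (eG X w₂) := by
    have h : dV X 1 (eF X w₁) = dV X 1 (eG X w₂) := by rw [← h₂₁, dV_one_eF]
    intro i
    fin_cases i
    exacts [rfl, (dV_one_eF w₁).symm.trans h, h]
  obtain ⟨τ, hτ⟩ := hβ₃.surjective (coneLift _ hF)
  have hτ' : ∀ i : Fin 3, (colMap (mkOfLe 0 i.succ (Fin.zero_le _)) X).app _ τ =
      ![eG X w₂, eG X w₁, eF X w₁] i := fun i =>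
    (congrArg _ hτ).trans (slashMap_coneEdge_coneLift _ hF i)
  refine ⟨τ, bousfieldMap_two_eq_iff.2 ⟨?_, ?_⟩, bousfieldMap_two_eq_iff.2 ⟨?_, ?_⟩,
    bousfieldMap_two_eq_iff.2 ⟨?_, ?_⟩⟩
  · exact (colMap_app_colMap_app_of_comp_eq (by decide) τ).trans (hτ' 2)
  · exact (colMap_app_colMap_app_of_comp_eq (by decide) τ).trans (hτ' 1)
  · exact (colMap_app_colMap_app_of_comp_eq (by decide) τ).trans ((hτ' 2).trans h₂₁.symm)
  · exact (colMap_app_colMap_app_of_comp_eq (by decide) τ).trans (hτ' 0)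
  · exact (colMap_app_colMap_app_of_comp_eq (by decide) τ).trans ((hτ' 1).trans h₃₁.symm)
  · exact (colMap_app_colMap_app_of_comp_eq (by decide) τ).trans ((hτ' 0).trans h₂₃)

end Fraction

/-- Let `X` be a Bousfield-Segal space and `μ₂` a section of the acyclic Kan
fibration `β₂ = c₂\X`, with fraction operation `f/g := d₀ (μ₂ (f, g))` on vertices. Then the
fraction operation restricts to a map `X₁(x,y) × X₁(x,z) → X₁(z,y)` on hom-spaces, and, writing
`∼` for equality of classes in `π₀`:
(1) `f/f ∼ 1_y` for every vertex `f` of `X₁(x,y)`;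
(2) `f/1_x ∼ f` for every vertex `f` of `X₁(x,y)`;
(3) `f/g ∼ (f/h)/(g/h)` for every compatible triple `(f,g,h)` of vertices of `X₁`.
Here pairs `(f,g)` of vertices of `X₁` with `d₁ f = d₁ g` are identified with vertices `w` of
`C₂\X` via the restrictions `eF`, `eG` along the two edges of `C₂` (a bijective correspondence,
recorded by the first clause). -/
theorem fraction_operation_properties (X : BSSet) (hX : IsBSegal X)
    (μ₂ : slash (coneSub 2).toFunctor X ⟶ col 2 X)
    (hμ₂ : μ₂ ≫ bousfieldMap 2 X = 𝟙 (slash (coneSub 2).toFunctor X)) :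
    (∀ f g : vert (col 1 X), dV X 1 f = dV X 1 g →
      ∃! w : vert (slash (coneSub 2).toFunctor X), eF X w = f ∧ eG X w = g) ∧
    (∀ (x y z : vert (col 0 X)) (w : vert (slash (coneSub 2).toFunctor X)),
      dV X 1 (eF X w) = x → dV X 0 (eF X w) = y →
      dV X 1 (eG X w) = x → dV X 0 (eG X w) = z →
      dV X 1 (fracV X μ₂ w) = z ∧ dV X 0 (fracV X μ₂ w) = y) ∧
    (∀ w : vert (slash (coneSub 2).toFunctor X), eF X w = eG X w →
      hSim (col 1 X) (fracV X μ₂ w) (oneV X (dV X 0 (eF X w)))) ∧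
    (∀ w : vert (slash (coneSub 2).toFunctor X), eG X w = oneV X (dV X 1 (eF X w)) →
      hSim (col 1 X) (fracV X μ₂ w) (eF X w)) ∧
    (∀ w₁ w₂ w₃ w₄ : vert (slash (coneSub 2).toFunctor X),
      eF X w₂ = eF X w₁ → eF X w₃ = eG X w₁ → eG X w₂ = eG X w₃ →
      eF X w₄ = fracV X μ₂ w₂ → eG X w₄ = fracV X μ₂ w₃ →
      hSim (col 1 X) (fracV X μ₂ w₁) (fracV X μ₂ w₄)) := by
  have hβ₂ := hX.trivialKanFibration_bousfieldMap le_rfl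
  have hβ₃ := hX.trivialKanFibration_bousfieldMap (n := 3) (by omega)
  refine ⟨fun f g h => existsUnique_eF_eG h, fun x y z w _ hy _ hz => ?_,
    fun w hw => ?_, fun w hw => ?_, fun w₁ w₂ w₃ w₄ h₂₁ h₃₁ h₂₃ h₄F h₄G => ?_⟩
  · exact ⟨(dV_one_fracV hμ₂ w).trans hz, (dV_zero_fracV hμ₂ w).trans hy⟩
  · exact hSim_iff_π₀_mk_eq.2 (π₀_mk_fracV_of_eF_eq_eG hβ₂ hμ₂ hw)
  · exact hSim_iff_π₀_mk_eq.2 (π₀_mk_fracV_of_eG_eq_oneV hβ₂ hμ₂ hw)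
  · obtain ⟨τ, rfl, rfl, rfl⟩ := exists_bousfieldMap_colδ hβ₃ h₂₁ h₃₁ h₂₃
    exact hSim_iff_π₀_mk_eq.2 (π₀_mk_fracV_colδ_one hβ₂ hμ₂ τ h₄F h₄G)

end BousfieldPaper
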